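/- For all integers m, n ≥ 1, the Legendre logarithmic functions satisfy the weighted orthogonality relation ∫₀¹ L_m(x) L_n(x) / ( ((1+x)/4) · (log₂((1+x)/4))² ) dx = δ_{mn} · ln 2/(2n−1). -/

import Mathlib

/-!
Substituting `x = 2 ^ (1 - u) - 1` maps `[0, 1]` onto itself; it turns `L_k(x)` into
`±((u + 1) / 2) P̃_{k-1}(u)` and the weight, divided by the Jacobian `2 ^ (1 - u) log 2`,
into `((u + 1) / 2)² / log 2`. The integral thus becomes `± log 2 ∫₀¹ P̃_{m-1} P̃_{n-1}`, and
orthogonality of the shifted Legendre polynomials is that of `P_n` on `[-1, 1]` under an affine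
change of variables. The latter follows from Rodrigues' formula by `n` integrations by parts,
the boundary terms vanishing because `±1` are `n`-fold roots of `(x² - 1)ⁿ`; the norm comes from
`∫₋₁¹ (x² - 1)ⁿ dx = (-1)ⁿ 2^(2n+1) (n!)² / (2n+1)!`.
-/

open Polynomial MeasureTheory Real Filter

/-- The Legendre polynomial of degree `n`, via the Rodrigues formula
`P_n(x) = 1/(2^n n!) dⁿ/dxⁿ (x² - 1)ⁿ`. -/
noncomputable def legendre (n : ℕ) : Polynomial ℝ :=
  (1 / (2 ^ n * n.factorial) : ℝ) • derivative^[n] ((X ^ 2 - 1) ^ n)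

/-- The shifted Legendre polynomial `P̃_n(x) = P_n(2x - 1)` on `[0,1]`. -/
noncomputable def shiftedLegendre (n : ℕ) (x : ℝ) : ℝ :=
  (legendre n).eval (2 * x - 1)

/-- The altered Legendre polynomial `A_n(x) = ((x+1)/2) P̃_{n-1}(x)` for `n ≥ 1`. -/
noncomputable def alteredLegendre (n : ℕ) (x : ℝ) : ℝ :=
  ((x + 1) / 2) * shiftedLegendre (n - 1) x

/-- The Legendre logarithmic function `L_n(x) = (-1)^{n-1} A_n(1 - log₂(1+x))`. -/
noncomputable def legendreLog (n : ℕ) (x : ℝ) : ℝ :=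
  (-1) ^ (n - 1) * alteredLegendre n (1 - Real.logb 2 (1 + x))

open intervalIntegral Set
open scoped Nat

namespace Polynomial

theorem intervalIntegrable_eval (p : ℝ[X]) (a b : ℝ) :
    IntervalIntegrable (fun x => p.eval x) volume a b :=
  p.continuous.intervalIntegrable a b

theorem integral_eval_derivative (p : ℝ[X]) (a b : ℝ) :
    ∫ x in a..b, p.derivative.eval x = p.eval b - p.eval a :=
  integral_eq_sub_of_hasDerivAt (fun x _ => p.hasDerivAt x)
    (p.derivative.intervalIntegrable_eval a b)

theorem integral_eval_mul_iterate_derivative (p q : ℝ[X]) {a b : ℝ} (k : ℕ)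
    (ha : ∀ i < k, (derivative^[i] p).eval a = 0) (hb : ∀ i < k, (derivative^[i] p).eval b = 0) :
    ∫ x in a..b, q.eval x * (derivative^[k] p).eval x =
      (-1) ^ k * ∫ x in a..b, (derivative^[k] q).eval x * p.eval x := by
  induction k generalizing q with
  | zero => simp
  | succ k ih =>
    rw [Function.iterate_succ_apply', integral_mul_deriv_eq_deriv_mul
      (fun x _ => q.hasDerivAt x) (fun x _ => (derivative^[k] p).hasDerivAt x)
      (intervalIntegrable_eval _ _ _) (intervalIntegrable_eval _ _ _),
      ha k k.lt_succ_self, hb k k.lt_succ_self,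
      ih _ (fun i hi => ha i (hi.trans k.lt_succ_self))
        (fun i hi => hb i (hi.trans k.lt_succ_self)),
      Function.iterate_succ_apply]
    ring

theorem isRoot_iterate_derivative_pow {R : Type*} [CommRing R] {p : R[X]} {x : R}
    (hp : p.IsRoot x) {n i : ℕ} (hi : i < n) : (derivative^[i] (p ^ n)).IsRoot x :=
  IsRoot.dvd (by simp [hp.eq_zero, Nat.sub_ne_zero_of_lt hi])
    (pow_sub_dvd_iterate_derivative_pow p n i)

theorem Monic.iterate_derivative_natDegree {R : Type*} [CommSemiring R] {p : R[X]}
    (hp : p.Monic) : derivative^[p.natDegree] p = C (p.natDegree ! : R) := by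
  rw [eq_C_of_natDegree_le_zero ((natDegree_iterate_derivative _ _).trans (by simp)),
    coeff_iterate_derivative, zero_add, Nat.descFactorial_self, hp.coeff_natDegree, nsmul_one]

theorem monic_X_sq_sub_one_pow (n : ℕ) : ((X ^ 2 - 1 : ℝ[X]) ^ n).Monic := by
  simpa using (monic_X_pow_sub_C (1 : ℝ) two_ne_zero).pow n

theorem natDegree_X_sq_sub_one_pow (n : ℕ) : ((X ^ 2 - 1 : ℝ[X]) ^ n).natDegree = 2 * n := by
  rw [natDegree_pow, show (X ^ 2 - 1 : ℝ[X]) = X ^ 2 - C 1 by simp, natDegree_X_pow_sub_C,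
    mul_comm]

theorem eval_iterate_derivative_X_sq_sub_one_pow {n i : ℕ} (hi : i < n) {x : ℝ} (hx : x ^ 2 = 1) :
    (derivative^[i] ((X ^ 2 - 1 : ℝ[X]) ^ n)).eval x = 0 :=
  isRoot_iterate_derivative_pow (by simp [hx]) hi

end Polynomial

theorem integral_X_sq_sub_one_pow_succ (n : ℕ) :
    (2 * n + 3 : ℝ) * ∫ x in (-1 : ℝ)..1, (x ^ 2 - 1) ^ (n + 1) =
      -(2 * n + 2) * ∫ x in (-1 : ℝ)..1, (x ^ 2 - 1) ^ n := by
  have hderiv : derivative (X * (X ^ 2 - 1) ^ (n + 1) : ℝ[X]) =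
      C (2 * n + 3 : ℝ) * (X ^ 2 - 1) ^ (n + 1) + C (2 * n + 2 : ℝ) * (X ^ 2 - 1) ^ n := by
    simp only [derivative_mul, derivative_X, derivative_pow, derivative_sub, derivative_one,
      Nat.add_sub_cancel, map_add, map_mul, map_ofNat, map_natCast]
    push_cast
    ring
  have hftc := integral_eval_derivative (X * (X ^ 2 - 1) ^ (n + 1) : ℝ[X]) (-1) 1
  simp only [hderiv, eval_add, eval_mul, eval_C, eval_pow, eval_sub, eval_X, eval_one] at hftc
  rw [intervalIntegral.integral_add (by apply Continuous.intervalIntegrable; fun_prop)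
    (by apply Continuous.intervalIntegrable; fun_prop), intervalIntegral.integral_const_mul,
    intervalIntegral.integral_const_mul] at hftc
  norm_num at hftc
  linarith

theorem integral_X_sq_sub_one_pow (n : ℕ) :
    ∫ x in (-1 : ℝ)..1, (x ^ 2 - 1) ^ n =
      (-1) ^ n * 2 ^ (2 * n + 1) * (n ! : ℝ) ^ 2 / (2 * n + 1)! := by
  induction n with
  | zero => norm_num
  | succ n ih =>
    have hJ : ∫ x in (-1 : ℝ)..1, (x ^ 2 - 1) ^ (n + 1) =
        -(2 * n + 2) * ((-1) ^ n * 2 ^ (2 * n + 1) * (n ! : ℝ) ^ 2 / (2 * n + 1)!) /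
          (2 * n + 3) := by
      rw [eq_div_iff (by positivity), mul_comm, integral_X_sq_sub_one_pow_succ, ih]
    rw [hJ, Nat.factorial_succ n, show 2 * (n + 1) + 1 = 2 * n + 1 + 1 + 1 by ring,
      Nat.factorial_succ (2 * n + 1 + 1), Nat.factorial_succ (2 * n + 1)]
    push_cast
    field_simp
    ring

theorem legendre_eq_C_mul (n : ℕ) :
    legendre n = C (2 ^ n * n ! : ℝ)⁻¹ * derivative^[n] ((X ^ 2 - 1) ^ n) := by
  rw [legendre, smul_eq_C_mul, one_div]

theorem natDegree_legendre_le (n : ℕ) : (legendre n).natDegree ≤ n :=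
  (natDegree_smul_le _ _).trans <| (natDegree_iterate_derivative _ _).trans <| by
    rw [natDegree_X_sq_sub_one_pow]; omega

theorem integral_eval_mul_legendre (q : ℝ[X]) (n : ℕ) :
    ∫ x in (-1 : ℝ)..1, q.eval x * (legendre n).eval x =
      (-1) ^ n * (2 ^ n * n ! : ℝ)⁻¹ *
        ∫ x in (-1 : ℝ)..1, (derivative^[n] q).eval x * ((X ^ 2 - 1) ^ n : ℝ[X]).eval x := by
  simp_rw [legendre_eq_C_mul, eval_mul, eval_C, mul_left_comm (q.eval _)]
  rw [intervalIntegral.integral_const_mul, integral_eval_mul_iterate_derivative _ _ n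
    (fun i hi => eval_iterate_derivative_X_sq_sub_one_pow hi (by norm_num))
    (fun i hi => eval_iterate_derivative_X_sq_sub_one_pow hi (by norm_num))]
  ring

theorem integral_eval_mul_legendre_eq_zero {q : ℝ[X]} {n : ℕ} (hq : q.natDegree < n) :
    ∫ x in (-1 : ℝ)..1, q.eval x * (legendre n).eval x = 0 := by
  rw [integral_eval_mul_legendre, iterate_derivative_eq_zero hq]
  simp

theorem iterate_derivative_legendre_self (n : ℕ) :
    derivative^[n] (legendre n) = C ((2 * n)! / (2 ^ n * n !) : ℝ) := by
  rw [legendre_eq_C_mul, iterate_derivative_C_mul, ← Function.iterate_add_apply, ← two_mul]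
  have htop := (monic_X_sq_sub_one_pow n).iterate_derivative_natDegree
  rw [natDegree_X_sq_sub_one_pow] at htop
  rw [htop, ← C_mul, div_eq_inv_mul]

theorem integral_legendre_mul_self (n : ℕ) :
    ∫ x in (-1 : ℝ)..1, (legendre n).eval x * (legendre n).eval x = 2 / (2 * n + 1) := by
  rw [integral_eval_mul_legendre, iterate_derivative_legendre_self]
  simp only [eval_C, eval_pow, eval_sub, eval_X, eval_one]
  rw [intervalIntegral.integral_const_mul, integral_X_sq_sub_one_pow, Nat.factorial_succ]
  push_cast
  field_simp
  ring_nf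
  rw [pow_mul', neg_one_sq, one_pow, one_mul]

theorem integral_legendre_mul_legendre (m n : ℕ) :
    ∫ x in (-1 : ℝ)..1, (legendre m).eval x * (legendre n).eval x =
      if m = n then (2 / (2 * n + 1) : ℝ) else 0 := by
  rcases lt_trichotomy m n with h | rfl | h
  · rw [if_neg h.ne, integral_eval_mul_legendre_eq_zero ((natDegree_legendre_le m).trans_lt h)]
  · rw [if_pos rfl, integral_legendre_mul_self]
  · rw [if_neg h.ne', integral_congr (fun x _ => mul_comm _ _),
      integral_eval_mul_legendre_eq_zero ((natDegree_legendre_le n).trans_lt h)]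

theorem integral_shiftedLegendre_mul_shiftedLegendre (j k : ℕ) :
    ∫ x in (0 : ℝ)..1, shiftedLegendre j x * shiftedLegendre k x =
      if j = k then (1 / (2 * k + 1) : ℝ) else 0 := by
  simp only [_root_.shiftedLegendre]
  rw [intervalIntegral.integral_comp_mul_sub (fun y => (legendre j).eval y * (legendre k).eval y)
    two_ne_zero]
  norm_num [integral_legendre_mul_legendre]
  split_ifs <;> field_simp

theorem integral_zero_one_eq_integral_comp_two_rpow (F : ℝ → ℝ) :
    ∫ x in (0 : ℝ)..1, F x = ∫ u in (0 : ℝ)..1, log 2 * 2 ^ (1 - u) * F (2 ^ (1 - u) - 1) := by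
  set f : ℝ → ℝ := fun u => 2 ^ (1 - u) - 1
  have hf : ∀ u, HasDerivAt f (-(log 2 * 2 ^ (1 - u))) u := fun u => by
    simpa [f] using (((hasDerivAt_id u).const_sub 1).const_rpow two_pos).sub_const 1
  have hanti : StrictAnti f := fun u v huv => by
    simpa [f] using Real.rpow_lt_rpow_of_exponent_lt one_lt_two (by linarith : 1 - v < 1 - u)
  have himage : f '' Icc 0 1 = Icc 0 1 := by
    rw [ContinuousOn.image_Icc_of_antitoneOn zero_le_one
      (fun u _ => (hf u).continuousAt.continuousWithinAt) (hanti.antitone.antitoneOn _)]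
    norm_num [f]
  have hcov := integral_image_eq_integral_abs_deriv_smul (measurableSet_Icc (a := (0 : ℝ)) (b := 1))
    (fun u _ => (hf u).hasDerivWithinAt) hanti.injective.injOn F
  rw [himage] at hcov
  have habs : ∀ u : ℝ, |log 2 * 2 ^ (1 - u)| = log 2 * 2 ^ (1 - u) := fun u =>
    abs_of_pos (by positivity)
  simp only [abs_neg, habs, smul_eq_mul] at hcov
  rw [intervalIntegral.integral_of_le zero_le_one, intervalIntegral.integral_of_le zero_le_one,
    ← integral_Icc_eq_integral_Ioc, ← integral_Icc_eq_integral_Ioc, hcov]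

theorem legendreLog_two_rpow_one_sub_sub_one (k : ℕ) (u : ℝ) :
    legendreLog k (2 ^ (1 - u) - 1) = (-1) ^ (k - 1) * alteredLegendre k u := by
  rw [legendreLog, add_sub_cancel, Real.logb_rpow two_pos (by norm_num), sub_sub_cancel]

theorem two_rpow_div_four_mul_logb_sq (t : ℝ) :
    2 ^ t / 4 * Real.logb 2 (2 ^ t / 4) ^ 2 = 2 ^ t * ((t - 2) / 2) ^ 2 := by
  have h : (2 : ℝ) ^ t / 4 = 2 ^ (t - 2) := by
    rw [rpow_sub two_pos]
    norm_num
  rw [h, Real.logb_rpow two_pos (by norm_num), rpow_sub two_pos]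
  norm_num
  ring

/-- Weighted orthogonality of the Legendre logarithmic functions:
`∫₀¹ L_m(x) L_n(x) / (((1+x)/4) log₂²((1+x)/4)) dx = δ_{mn} ln 2/(2n-1)`. -/
theorem legendreLog_orthogonality (m n : ℕ) (hm : 1 ≤ m) (hn : 1 ≤ n) :
    ∫ x in (0:ℝ)..1,
        legendreLog m x * legendreLog n x /
          (((1 + x) / 4) * (Real.logb 2 ((1 + x) / 4)) ^ 2) =
      (if m = n then 1 else 0) * Real.log 2 / (2 * (n : ℝ) - 1) := by
  have hsubst : ∀ u ∈ uIcc (0 : ℝ) 1,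
      log 2 * 2 ^ (1 - u) * (legendreLog m (2 ^ (1 - u) - 1) * legendreLog n (2 ^ (1 - u) - 1) /
        ((1 + (2 ^ (1 - u) - 1)) / 4 * Real.logb 2 ((1 + (2 ^ (1 - u) - 1)) / 4) ^ 2)) =
      (-1) ^ (m - 1 + (n - 1)) * log 2 *
        (shiftedLegendre (m - 1) u * shiftedLegendre (n - 1) u) := by
    intro u hu
    have hu' : 1 - u - 2 ≠ 0 := by rw [uIcc_of_le zero_le_one] at hu; linarith [hu.1]
    rw [legendreLog_two_rpow_one_sub_sub_one, legendreLog_two_rpow_one_sub_sub_one, add_sub_cancel,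
      two_rpow_div_four_mul_logb_sq, alteredLegendre, alteredLegendre, pow_add]
    field_simp
    ring
  rw [integral_zero_one_eq_integral_comp_two_rpow, integral_congr hsubst,
    intervalIntegral.integral_const_mul, integral_shiftedLegendre_mul_shiftedLegendre]
  rcases eq_or_ne m n with rfl | hmn
  · rw [if_pos rfl, if_pos rfl, ← two_mul, pow_mul, neg_one_sq, one_pow, Nat.cast_sub hm]
    push_cast
    field_simp
    ring
  · rw [if_neg (by omega), if_neg hmn]
    simp
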